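/- arXiv:2409.09793 — 4 statements merged into one kernel-verified Lean document; each statement's English description precedes it below -/
import Mathlib

section
/- Let N ≥ 4 be a square-free natural number. Then for each r ∈ {2, 3, N−3, N−2}, every r×r principal minor of the N-dimensional Fourier matrix 𝓕_N is nonzero; that is, for every subset K ⊆ {0,1,…,N−1} with |K| ∈ {2, 3, N−3, N−2}, the matrix 𝓕_N[K] is invertible. -/
open Complex Matrix Finset

/-- `omegaN N` is the principal `N`-th root of unity `ω = e^{2πi/N}`. -/
noncomputable def omegaN (N : ℕ) : ℂ := Complex.exp (2 * Real.pi * Complex.I / N)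

/-- `fourierMinor N K` is the principal submatrix `𝓕_N[K] = (ω^{kℓ})_{k,ℓ ∈ K}`
of the `N`-dimensional Fourier matrix, indexed by the finite set `K`. -/
noncomputable def fourierMinor (N : ℕ) (K : Finset ℕ) : Matrix K K ℂ :=
  fun k l => omegaN N ^ ((k : ℕ) * (l : ℕ))

lemma omegaN_prim (N : ℕ) (h : N ≠ 0) : IsPrimitiveRoot (omegaN N) N := by
  simpa [omegaN] using Complex.isPrimitiveRoot_exp N h

lemma omegaN_abs (N : ℕ) : ‖omegaN N‖ = 1 := by
  rw [omegaN, show (2 * Real.pi * Complex.I / N : ℂ) = ((2 * Real.pi / N : ℝ) : ℂ) * Complex.I by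
    push_cast; ring]
  exact Complex.norm_exp_ofReal_mul_I _

lemma omegaN_ne_zero (N : ℕ) : omegaN N ≠ 0 := Complex.exp_ne_zero _

lemma conj_mul_self' (N n : ℕ) : (starRingEnd ℂ) (omegaN N ^ n) * omegaN N ^ n = 1 := by
  rw [mul_comm, Complex.mul_conj]
  norm_cast
  simp [Complex.normSq_eq_norm_sq, map_pow, omegaN_abs]

lemma conj_omegaN_pow (N n : ℕ) : (starRingEnd ℂ) (omegaN N ^ n) = (omegaN N ^ n)⁻¹ :=
  eq_inv_of_mul_eq_one_left (conj_mul_self' N n)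

lemma not_dvd_sq (N : ℕ) (hsf : Squarefree N) {m : ℕ} (h0 : 0 < m) (hm : m < N) :
    ¬ N ∣ m * m := fun h => by
  have : N ∣ m := (hsf.dvd_pow_iff_dvd (two_ne_zero)).1 (by rwa [sq])
  exact absurd (Nat.le_of_dvd h0 this) (not_le.2 hm)

lemma omegaN_pow_eq_one_iff (N : ℕ) (hN : N ≠ 0) (n : ℕ) :
    omegaN N ^ n = 1 ↔ N ∣ n := (omegaN_prim N hN).pow_eq_one_iff_dvd n

lemma three_core (N : ℕ) (hN : N ≠ 0) (hsf : Squarefree N) {p q : ℕ}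
    (hp : 0 < p) (hq : 0 < q) (hpq : p + q < N) :
    (1 - omegaN N ^ (p * (p + q))) * (omegaN N ^ (p * q) - 1)
      + (omegaN N ^ (p * q) - omegaN N ^ (p * (p + q))) * (1 - omegaN N ^ (q * (p + q))) ≠ 0 := by
  intro hk
  set ζ := omegaN N with hζ
  set x := ζ ^ (p * (p + q)) with hxdef
  set y := ζ ^ (p * q) with hydef
  set z := ζ ^ (q * (p + q)) with hzdef
  have hx0 : x ≠ 0 := pow_ne_zero _ (omegaN_ne_zero N)
  have hy0 : y ≠ 0 := pow_ne_zero _ (omegaN_ne_zero N)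
  have hz0 : z ≠ 0 := pow_ne_zero _ (omegaN_ne_zero N)
  have hx : (starRingEnd ℂ) x = x⁻¹ := conj_omegaN_pow N _
  have hy : (starRingEnd ℂ) y = y⁻¹ := conj_omegaN_pow N _
  have hz : (starRingEnd ℂ) z = z⁻¹ := conj_omegaN_pow N _
  have hk2 := congrArg (starRingEnd ℂ) hk
  simp only [map_add, _root_.map_mul, map_sub, _root_.map_one, map_zero, hx, hy, hz] at hk2
  field_simp at hk2
  have h3 : x * y * ((1 - x) * (y - 1) * (z - 1)) = 0 := by linear_combination (x*y) * (hk2 - hk)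
  have hone : ∀ n : ℕ, ζ ^ n = 1 → N ∣ n := fun n h => (omegaN_pow_eq_one_iff N hN n).1 h
  have hpN : ¬ N ∣ p * p := not_dvd_sq N hsf hp (lt_of_le_of_lt (Nat.le_add_right p q) hpq)
  have hqN : ¬ N ∣ q * q := not_dvd_sq N hsf hq (lt_of_le_of_lt (Nat.le_add_left q p) hpq)
  have hpqN : ¬ N ∣ (p + q) * (p + q) := not_dvd_sq N hsf (by omega) hpq
  have hxy : ¬ (x = 1 ∧ y = 1) := by
    rintro ⟨h1, h2⟩
    have d1 := hone _ h1; have d2 := hone _ h2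
    exact hpN (by have : p * (p + q) = p * p + p * q := by ring
                  exact (Nat.dvd_add_right d2).1 (by rwa [this, Nat.add_comm] at d1))
  have hxz : ¬ (x = 1 ∧ z = 1) := by
    rintro ⟨h1, h2⟩
    have d1 := hone _ h1; have d2 := hone _ h2
    exact hpqN (by have : (p + q) * (p + q) = p * (p + q) + q * (p + q) := by ring
                   rw [this]; exact dvd_add d1 d2)
  have hyz : ¬ (y = 1 ∧ z = 1) := by
    rintro ⟨h1, h2⟩
    have d1 := hone _ h1; have d2 := hone _ h2
    exact hqN (by have : q * (p + q) = q * q + p * q := by ring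
                  exact (Nat.dvd_add_right d1).1 (by rwa [this, Nat.add_comm] at d2))
  rcases mul_eq_zero.1 h3 with h | h
  · exact absurd h (mul_ne_zero hx0 hy0)
  rcases mul_eq_zero.1 h with h | h
  · rcases mul_eq_zero.1 h with h' | h'
    · -- x = 1
      have hx1 : x = 1 := (sub_eq_zero.1 h').symm
      have h5 : (y - 1) * (1 - z) = 0 := by
        linear_combination hk + ((1 - z) + (y - 1)) * hx1
      rcases mul_eq_zero.1 h5 with h6 | h6
      · exact hxy ⟨hx1, sub_eq_zero.1 h6⟩
      · exact hxz ⟨hx1, (sub_eq_zero.1 h6).symm⟩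
    · -- y = 1
      have hy1 : y = 1 := sub_eq_zero.1 h'
      have h5 : (1 - x) * (1 - z) = 0 := by
        linear_combination hk + ((x - 1) + (z - 1)) * hy1
      rcases mul_eq_zero.1 h5 with h6 | h6
      · exact hxy ⟨(sub_eq_zero.1 h6).symm, hy1⟩
      · exact hyz ⟨hy1, (sub_eq_zero.1 h6).symm⟩
  · -- z = 1
    have hz1 : z = 1 := sub_eq_zero.1 h
    have h5 : (1 - x) * (y - 1) = 0 := by
      linear_combination hk + (y - x) * hz1
    rcases mul_eq_zero.1 h5 with h6 | h6
    · exact hxz ⟨(sub_eq_zero.1 h6).symm, hz1⟩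
    · exact hyz ⟨sub_eq_zero.1 h6, hz1⟩

lemma det_two (N : ℕ) (hN : N ≠ 0) (hsf : Squarefree N) (K : Finset ℕ)
    (hK : K ⊆ Finset.range N) (h2 : K.card = 2) : (fourierMinor N K).det ≠ 0 := by
  have e := K.orderIsoOfFin h2
  rw [← Matrix.det_submatrix_equiv_self e.toEquiv, Matrix.det_fin_two]
  simp only [Matrix.submatrix_apply, fourierMinor, RelIso.coe_fn_toEquiv]
  have hab : ((e 0 : K) : ℕ) < ((e 1 : K) : ℕ) :=
    Subtype.coe_lt_coe.2 (e.strictMono (by decide : (0 : Fin 2) < 1))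
  have hbN : ((e 1 : K) : ℕ) < N := Finset.mem_range.1 (hK (e 1).2)
  set a := ((e 0 : K) : ℕ)
  set b := ((e 1 : K) : ℕ)
  obtain ⟨p, hp, hb⟩ : ∃ p, 0 < p ∧ b = a + p := ⟨b - a, by omega, by omega⟩
  intro h0
  have key : omegaN N ^ (a * b) * omegaN N ^ (a * b) * (omegaN N ^ (p * p) - 1) = 0 := by
    rw [hb] at h0 ⊢
    linear_combination h0
  rcases mul_eq_zero.1 key with h | h
  · exact (mul_ne_zero (pow_ne_zero _ (omegaN_ne_zero N)) (pow_ne_zero _ (omegaN_ne_zero N))) h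
  · exact not_dvd_sq N hsf hp (by omega)
      ((omegaN_pow_eq_one_iff N hN _).1 (sub_eq_zero.1 h))

lemma det_three (N : ℕ) (hN : N ≠ 0) (hsf : Squarefree N) (K : Finset ℕ)
    (hK : K ⊆ Finset.range N) (h3 : K.card = 3) : (fourierMinor N K).det ≠ 0 := by
  have e := K.orderIsoOfFin h3
  rw [← Matrix.det_submatrix_equiv_self e.toEquiv, Matrix.det_fin_three]
  simp only [Matrix.submatrix_apply, fourierMinor, RelIso.coe_fn_toEquiv]
  have hab : ((e 0 : K) : ℕ) < ((e 1 : K) : ℕ) :=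
    Subtype.coe_lt_coe.2 (e.strictMono (by decide : (0 : Fin 3) < 1))
  have hbc : ((e 1 : K) : ℕ) < ((e 2 : K) : ℕ) :=
    Subtype.coe_lt_coe.2 (e.strictMono (by decide : (1 : Fin 3) < 2))
  have hcN : ((e 2 : K) : ℕ) < N := Finset.mem_range.1 (hK (e 2).2)
  set a := ((e 0 : K) : ℕ)
  set b := ((e 1 : K) : ℕ)
  set c := ((e 2 : K) : ℕ)
  obtain ⟨p, hp, hb⟩ : ∃ p, 0 < p ∧ b = a + p := ⟨b - a, by omega, by omega⟩
  obtain ⟨q, hq, hc⟩ : ∃ q, 0 < q ∧ c = a + p + q := ⟨c - b, by omega, by omega⟩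
  have hpq : p + q < N := by omega
  intro h0
  apply three_core N hN hsf hp hq hpq
  have key : omegaN N ^ (a * b + b * c + a * c) *
      ((1 - omegaN N ^ (p * (p + q))) * (omegaN N ^ (p * q) - 1)
        + (omegaN N ^ (p * q) - omegaN N ^ (p * (p + q))) * (1 - omegaN N ^ (q * (p + q)))) = 0 := by
    rw [hb, hc] at h0 ⊢
    linear_combination omegaN N ^ (p * q) * h0
  rcases mul_eq_zero.1 key with h | h
  · exact absurd h (pow_ne_zero _ (omegaN_ne_zero N))
  · exact h

lemma jacobi_aux {m n : Type*} [Fintype m] [Fintype n] [DecidableEq m] [DecidableEq n]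
    (P Q : Matrix (m ⊕ n) (m ⊕ n) ℂ) (h : P * Q = 1) :
    (P.toBlocks₁₁).det = P.det * (Q.toBlocks₂₂).det := by
  have h' := h
  rw [← fromBlocks_toBlocks P, ← fromBlocks_toBlocks Q, fromBlocks_multiply] at h'
  rw [show (1 : Matrix (m ⊕ n) (m ⊕ n) ℂ) = fromBlocks 1 0 0 1 from (fromBlocks_one).symm] at h'
  obtain ⟨h11, h12, h21, h22⟩ := fromBlocks_inj.1 h'
  have h2 : P * fromBlocks 1 Q.toBlocks₁₂ 0 Q.toBlocks₂₂
      = fromBlocks P.toBlocks₁₁ 0 P.toBlocks₂₁ 1 := by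
    conv_lhs => rw [← fromBlocks_toBlocks P]
    rw [fromBlocks_multiply]
    exact fromBlocks_inj.2 ⟨by simp, by simpa using h12, by simp, by simpa using h22⟩
  have h3 := congrArg Matrix.det h2
  rw [det_mul, det_fromBlocks_zero₂₁, det_fromBlocks_zero₁₂, det_one] at h3
  simpa using h3.symm

noncomputable def Fmat (N : ℕ) : Matrix (Fin N) (Fin N) ℂ :=
  fun k l => omegaN N ^ ((k : ℕ) * (l : ℕ))

noncomputable def Gmat (N : ℕ) : Matrix (Fin N) (Fin N) ℂ :=
  fun k l => (N : ℂ)⁻¹ * (starRingEnd ℂ) (omegaN N ^ ((k : ℕ) * (l : ℕ)))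

lemma Fmat_mul_Gmat (N : ℕ) (hN : N ≠ 0) : Fmat N * Gmat N = 1 := by
  have hprim := omegaN_prim N hN
  ext k l
  simp only [Matrix.mul_apply, Fmat, Gmat, Matrix.one_apply]
  have hterm : ∀ m : Fin N, omegaN N ^ ((k : ℕ) * (m : ℕ)) *
      ((N : ℂ)⁻¹ * (starRingEnd ℂ) (omegaN N ^ ((m : ℕ) * (l : ℕ))))
      = (N : ℂ)⁻¹ * (omegaN N ^ (k : ℕ) * (starRingEnd ℂ) (omegaN N ^ (l : ℕ))) ^ (m : ℕ) := by
    intro m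
    rw [mul_pow, ← pow_mul, ← map_pow, ← pow_mul, mul_comm (l : ℕ) (m : ℕ)]
    ring
  rw [Finset.sum_congr rfl (fun m _ => hterm m), ← Finset.mul_sum]
  set μ := omegaN N ^ (k : ℕ) * (starRingEnd ℂ) (omegaN N ^ (l : ℕ)) with hμ
  by_cases hkl : k = l
  · subst hkl
    have : μ = 1 := by rw [hμ, mul_comm]; exact conj_mul_self' N _
    simp [this, Finset.card_univ]
    exact inv_mul_cancel₀ (Nat.cast_ne_zero.2 hN)
  · have hμ1 : μ ≠ 1 := by
      intro h1
      apply hkl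
      have h2 : omegaN N ^ (k : ℕ) = omegaN N ^ (l : ℕ) := by
        have h3 : μ * omegaN N ^ (l : ℕ) = omegaN N ^ (k : ℕ) := by
          rw [hμ, mul_assoc, conj_mul_self' N, mul_one]
        rw [← h3, h1, one_mul]
      exact Fin.ext (hprim.pow_inj k.2 l.2 h2)
    have hμN : μ ^ N = 1 := by
      rw [hμ, mul_pow, ← pow_mul, mul_comm (k:ℕ) N, pow_mul, hprim.pow_eq_one, one_pow,
        ← map_pow, ← pow_mul, mul_comm (l:ℕ) N, pow_mul, hprim.pow_eq_one, one_pow,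
        _root_.map_one, one_mul]
    have hsum : ∑ m : Fin N, μ ^ (m : ℕ) = 0 := by
      rw [Fin.sum_univ_eq_sum_range (fun i => μ ^ i), geom_sum_eq hμ1, hμN]
      simp
    rw [hsum, if_neg hkl, mul_zero]

lemma Fmat_det_ne_zero (N : ℕ) (hN : N ≠ 0) : (Fmat N).det ≠ 0 := by
  have hprim := omegaN_prim N hN
  have : Fmat N = Matrix.vandermonde (fun k : Fin N => omegaN N ^ (k : ℕ)) := by
    ext k l
    simp [Fmat, Matrix.vandermonde, pow_mul]
  rw [this, Matrix.det_vandermonde]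
  apply Finset.prod_ne_zero_iff.2
  intro i _
  apply Finset.prod_ne_zero_iff.2
  intro j hj
  rw [Finset.mem_Ioi] at hj
  intro h
  exact absurd (Fin.ext (hprim.pow_inj j.2 i.2 (sub_eq_zero.1 h))) (by exact Fin.ne_of_gt hj)

lemma det_dual (N : ℕ) (hN : N ≠ 0) (K : Finset ℕ) (hK : K ⊆ Finset.range N)
    (hL : (fourierMinor N (Finset.range N \ K)).det ≠ 0) :
    (fourierMinor N K).det ≠ 0 := by
  classical
  set L := Finset.range N \ K with hLdef
  set e := Equiv.sumCompl (fun i : Fin N => (i : ℕ) ∈ K) with hedef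
  set P := (Fmat N).submatrix e e with hPdef
  set Q := (Gmat N).submatrix e e with hQdef
  have hPQ : P * Q = 1 := by
    rw [hPdef, hQdef, Matrix.submatrix_mul_equiv, Fmat_mul_Gmat N hN, Matrix.submatrix_one_equiv]
  have hjac := jacobi_aux P Q hPQ
  have hdetP : P.det = (Fmat N).det := Matrix.det_submatrix_equiv_self e _
  let φ : ↥K ≃ {x : Fin N // (x : ℕ) ∈ K} :=
    ⟨fun k => ⟨⟨k.1, Finset.mem_range.1 (hK k.2)⟩, k.2⟩,
     fun x => ⟨(x.1 : ℕ), x.2⟩, fun k => rfl, fun x => rfl⟩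
  let ψ : ↥L ≃ {x : Fin N // ¬ (x : ℕ) ∈ K} :=
    ⟨fun l => ⟨⟨l.1, Finset.mem_range.1 (Finset.mem_sdiff.1 l.2).1⟩, (Finset.mem_sdiff.1 l.2).2⟩,
     fun x => ⟨(x.1 : ℕ), Finset.mem_sdiff.2 ⟨Finset.mem_range.2 x.1.2, x.2⟩⟩,
     fun l => rfl, fun x => rfl⟩
  have hPK : fourierMinor N K = (P.toBlocks₁₁).submatrix φ φ := by
    ext k l
    rfl
  have hQL : (Q.toBlocks₂₂).submatrix ψ ψ = (N : ℂ)⁻¹ • (fourierMinor N L)ᴴ := by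
    ext l1 l2
    show (N : ℂ)⁻¹ * (starRingEnd ℂ) (omegaN N ^ ((l1 : ℕ) * (l2 : ℕ))) = _
    simp [fourierMinor, Matrix.conjTranspose_apply, Matrix.smul_apply, mul_comm (l1 : ℕ) (l2 : ℕ)]
  have hdetK : (fourierMinor N K).det = (P.toBlocks₁₁).det := by
    rw [hPK, Matrix.det_submatrix_equiv_self]
  have hdetL : (Q.toBlocks₂₂).det
      = ((N : ℂ)⁻¹) ^ (Fintype.card ↥L) * star (fourierMinor N L).det := by
    rw [← Matrix.det_submatrix_equiv_self ψ, hQL, Matrix.det_smul, Matrix.det_conjTranspose]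
  rw [hdetK, hjac, hdetP, hdetL]
  apply mul_ne_zero (Fmat_det_ne_zero N hN)
  apply mul_ne_zero (pow_ne_zero _ (inv_ne_zero (Nat.cast_ne_zero.2 hN)))
  exact star_ne_zero.2 hL

/-- If `N ≥ 4` is square-free, then every principal minor of the Fourier matrix `𝓕_N`
of size `2`, `3`, `N-3` or `N-2` is nonzero. -/
theorem fourier_principal_minors_nonzero_of_squarefree
    (N : ℕ) (hN : 4 ≤ N) (hsf : Squarefree N)
    (K : Finset ℕ) (hK : K ⊆ Finset.range N)
    (hcard : K.card = 2 ∨ K.card = 3 ∨ K.card = N - 3 ∨ K.card = N - 2) :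
    (fourierMinor N K).det ≠ 0 := by
  have hN0 : N ≠ 0 := by omega
  have hKcard : K.card ≤ N := by
    simpa using Finset.card_le_card hK
  rcases hcard with h | h | h | h
  · exact det_two N hN0 hsf K hK h
  · exact det_three N hN0 hsf K hK h
  · apply det_dual N hN0 K hK
    apply det_three N hN0 hsf _ Finset.sdiff_subset
    rw [Finset.card_sdiff_of_subset hK, Finset.card_range, h]
    omega
  · apply det_dual N hN0 K hK
    apply det_two N hN0 hsf _ Finset.sdiff_subset
    rw [Finset.card_sdiff_of_subset hK, Finset.card_range, h]
    omega
end

section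
/- Let N ≥ 4 be square-free. Then every 3×3 principal minor of the Fourier matrix 𝓕_N is nonzero: for all 0 ≤ a < b < c ≤ N−1, the matrix 𝓕_N[{a,b,c}] is invertible. -/
open Complex Matrix Finset

private lemma mul_conj_eq_one_of_norm_one {p : ℂ} (hp : ‖p‖ = 1) :
    p * (starRingEnd ℂ) p = 1 := by
  rw [Complex.mul_conj]
  norm_cast
  rw [Complex.normSq_eq_norm_sq, hp]
  norm_num

private lemma key_alg (p q s : ℂ) (hp : ‖p‖ = 1) (hq : ‖q‖ = 1) (hs : ‖s‖ = 1)
    (h : p * q + 2 * s - p * s - q * s - 1 = 0) :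
    (p = 1 ∧ q = 1) ∨ (p = 1 ∧ s = 1) ∨ (q = 1 ∧ s = 1) := by
  have hpP := mul_conj_eq_one_of_norm_one hp
  have hqQ := mul_conj_eq_one_of_norm_one hq
  have hsS := mul_conj_eq_one_of_norm_one hs
  set P := (starRingEnd ℂ) p with hP
  set Q := (starRingEnd ℂ) q with hQ
  set S := (starRingEnd ℂ) s with hS
  have h' : P * Q + 2 * S - P * S - Q * S - 1 = 0 := by
    have h' := congrArg (starRingEnd ℂ) h
    simpa only [map_sub, map_add, _root_.map_mul, _root_.map_one, map_zero,
      map_ofNat, ← hP, ← hQ, ← hS] using h'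
  have hG : s + 2 * (p * q) - q - p - p * q * s = 0 := by
    linear_combination (p * q * s) * h' + (q * s * S - s * q * Q) * hpP
      + (p * s * S - s) * hqQ + (q + p - 2 * p * q) * hsS
  have hABC : (1 - p) * (1 - q) * (1 - s) = 0 := by linear_combination hG - h
  rcases mul_eq_zero.mp hABC with hAB | hC
  · rcases mul_eq_zero.mp hAB with hA | hB
    · have hp1 : p = 1 := by linear_combination -hA
      have hBC : (1 - q) * (1 - s) = 0 := by
        linear_combination (q - s) * hp1 - h
      rcases mul_eq_zero.mp hBC with hB | hC
      · exact Or.inl ⟨hp1, by linear_combination -hB⟩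
      · exact Or.inr (Or.inl ⟨hp1, by linear_combination -hC⟩)
    · have hq1 : q = 1 := by linear_combination -hB
      have hAC : (1 - p) * (1 - s) = 0 := by
        linear_combination (p - s) * hq1 - h
      rcases mul_eq_zero.mp hAC with hA | hC
      · exact Or.inl ⟨by linear_combination -hA, hq1⟩
      · exact Or.inr (Or.inr ⟨hq1, by linear_combination -hC⟩)
  · have hs1 : s = 1 := by linear_combination -hC
    have hAB : (1 - p) * (1 - q) = 0 := by
      linear_combination h - (2 - p - q) * hs1
    rcases mul_eq_zero.mp hAB with hA | hB
    · exact Or.inr (Or.inl ⟨by linear_combination -hA, hs1⟩)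
    · exact Or.inr (Or.inr ⟨by linear_combination -hB, hs1⟩)

/-- If `N ≥ 4` is square-free, then every `3 × 3` principal minor of `𝓕_N` is nonzero. -/
theorem fourier_three_by_three_principal_minor_nonzero
    (N : ℕ) (hN : 4 ≤ N) (hsf : Squarefree N)
    (a b c : ℕ) (hab : a < b) (hbc : b < c) (hc : c ≤ N - 1) :
    (fourierMinor N {a, b, c}).det ≠ 0 := by
  obtain ⟨x, hx0, rfl⟩ : ∃ x, 0 < x ∧ b = a + x := ⟨b - a, by omega, by omega⟩
  obtain ⟨y, hy0, rfl⟩ : ∃ y, 0 < y ∧ c = a + x + y := ⟨c - (a + x), by omega, by omega⟩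
  set b := a + x with hb
  set c := a + x + y with hcdef
  set ω := omegaN N with hω
  have hN0 : (N : ℕ) ≠ 0 := by omega
  have hprim : IsPrimitiveRoot ω N := Complex.isPrimitiveRoot_exp N hN0
  have hω0 : ω ≠ 0 := by
    rw [hω]; exact Complex.exp_ne_zero _
  have hnorm : ‖ω‖ = 1 := by
    rw [hω, omegaN, Complex.norm_exp]
    have : (2 * Real.pi * Complex.I / N).re = 0 := by
      simp [Complex.div_re]
    rw [this, Real.exp_zero]
  -- the set membership facts
  have ha : a ∈ ({a, b, c} : Finset ℕ) := by simp
  have hbm : b ∈ ({a, b, c} : Finset ℕ) := by simp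
  have hcm : c ∈ ({a, b, c} : Finset ℕ) := by simp
  let g : Fin 3 → ({a, b, c} : Finset ℕ) := ![⟨a, ha⟩, ⟨b, hbm⟩, ⟨c, hcm⟩]
  have hg : Function.Bijective g := by
    constructor
    · intro i j hij
      fin_cases i <;> fin_cases j <;>
        simp [g, Subtype.ext_iff] at hij ⊢ <;> omega
    · rintro ⟨z, hz⟩
      simp only [Finset.mem_insert, Finset.mem_singleton] at hz
      rcases hz with rfl | rfl | rfl
      exacts [⟨0, rfl⟩, ⟨1, rfl⟩, ⟨2, rfl⟩]
  let e : Fin 3 ≃ ({a, b, c} : Finset ℕ) := Equiv.ofBijective g hg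
  have hdet : (fourierMinor N {a, b, c}).det =
      ω ^ (a*a + b*b + c*c) + 2 * ω ^ (a*b + b*c + a*c)
        - ω ^ (a*a + 2*(b*c)) - ω ^ (b*b + 2*(a*c)) - ω ^ (c*c + 2*(a*b)) := by
    rw [← Matrix.det_submatrix_equiv_self e, Matrix.det_fin_three]
    simp only [Matrix.submatrix_apply, fourierMinor, e, Equiv.ofBijective_apply, g,
      Matrix.cons_val_zero, Matrix.cons_val_one, Matrix.head_cons, Matrix.cons_val_two,
      Matrix.tail_cons]
    rw [← hω]
    ring
  intro h0
  rw [hdet] at h0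
  set p := ω ^ (x * (x + y)) with hpdef
  set q := ω ^ (y * (x + y)) with hqdef
  set s := ω ^ (x * y) with hsdef
  have hkey : p * q + 2 * s - p * s - q * s - 1 = 0 := by
    have hSne : ω ^ (a*b + b*c + a*c) ≠ 0 := pow_ne_zero _ hω0
    have hsne : s ≠ 0 := pow_ne_zero _ hω0
    have hmul : ω ^ (a*b + b*c + a*c) * (p * q + 2 * s - p * s - q * s - 1) =
        (ω ^ (a*a + b*b + c*c) + 2 * ω ^ (a*b + b*c + a*c)
          - ω ^ (a*a + 2*(b*c)) - ω ^ (b*b + 2*(a*c)) - ω ^ (c*c + 2*(a*b))) * s := by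
      rw [hpdef, hqdef, hsdef, hb, hcdef]
      simp only [← pow_add]
      ring_nf
    have := hmul
    rw [h0, zero_mul] at this
    exact (mul_eq_zero.mp this).resolve_left hSne
  have hnp : ∀ k : ℕ, ‖ω ^ k‖ = 1 := fun k => by rw [norm_pow, hnorm, one_pow]
  have hd : ∀ k : ℕ, ω ^ k = 1 ↔ (N : ℕ) ∣ k := fun k => hprim.pow_eq_one_iff_dvd k
  have hbound : x + y < N := by omega
  rcases key_alg p q s (hnp _) (hnp _) (hnp _) hkey with ⟨hp1, hq1⟩ | ⟨hp1, hs1⟩ | ⟨hq1, hs1⟩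
  · -- N ∣ x(x+y), N ∣ y(x+y) ⟹ N ∣ (x+y)²
    have h1 : N ∣ x * (x + y) := (hd _).mp hp1
    have h2 : N ∣ y * (x + y) := (hd _).mp hq1
    have h3 : N ∣ (x + y) ^ 2 := by
      have : (x + y) ^ 2 = x * (x + y) + y * (x + y) := by ring
      rw [this]; exact dvd_add h1 h2
    have h4 : N ∣ x + y := (hsf.dvd_pow_iff_dvd two_ne_zero).mp h3
    have := Nat.le_of_dvd (by omega) h4
    omega
  · have h1 : N ∣ x * (x + y) := (hd _).mp hp1
    have h2 : N ∣ x * y := (hd _).mp hs1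
    have h3 : N ∣ x ^ 2 := by
      have heq : x * (x + y) = x * y + x ^ 2 := by ring
      rw [heq] at h1
      exact (Nat.dvd_add_right h2).mp h1
    have h4 : N ∣ x := (hsf.dvd_pow_iff_dvd two_ne_zero).mp h3
    have := Nat.le_of_dvd (by omega) h4
    omega
  · have h1 : N ∣ y * (x + y) := (hd _).mp hq1
    have h2 : N ∣ x * y := (hd _).mp hs1
    have h3 : N ∣ y ^ 2 := by
      have heq : y * (x + y) = x * y + y ^ 2 := by ring
      rw [heq] at h1
      exact (Nat.dvd_add_right h2).mp h1
    have h4 : N ∣ y := (hsf.dvd_pow_iff_dvd two_ne_zero).mp h3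
    have := Nat.le_of_dvd (by omega) h4
    omega
end

section
/- Let N be any natural number, ω = e^{2πi/N}, and let 0 < a < b ≤ N−1. If det 𝓕_N[{0,a,b}] = 0, then N divides a², or N divides b², or N divides (b−a)². -/
open Complex Matrix Finset

/-- If the `3 × 3` principal minor `det 𝓕_N[{0,a,b}]` vanishes for `0 < a < b ≤ N - 1`,
then `N` divides `a²`, `b²`, or `(b - a)²`. -/
theorem fourier_det_three_by_three_zero_implies_div
    (N : ℕ) (hN : 0 < N) (a b : ℕ) (ha : 0 < a) (hab : a < b) (hb : b ≤ N - 1)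
    (hdet : (fourierMinor N {0, a, b}).det = 0) :
    N ∣ a ^ 2 ∨ N ∣ b ^ 2 ∨ N ∣ (b - a) ^ 2 := by
  have hω : IsPrimitiveRoot (omegaN N) N := Complex.isPrimitiveRoot_exp N hN.ne'
  have habs : ‖omegaN N‖ = 1 := by
    rw [omegaN, Complex.norm_exp]
    have : (2 * (Real.pi:ℂ) * Complex.I / N).re = 0 := by
      simp [Complex.div_re, Complex.mul_re, Complex.mul_im]
    rw [this, Real.exp_zero]
  have h0 : (0:ℕ) ∈ ({0,a,b} : Finset ℕ) := by simp
  have hA : a ∈ ({0,a,b} : Finset ℕ) := by simp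
  have hB : b ∈ ({0,a,b} : Finset ℕ) := by simp
  let e : Fin 3 → ({0,a,b}:Finset ℕ) := ![⟨0,h0⟩,⟨a,hA⟩,⟨b,hB⟩]
  have he : Function.Bijective e := by
    constructor
    · intro i j hij
      fin_cases i <;> fin_cases j <;> simp_all [e, Subtype.ext_iff] <;> omega
    · rintro ⟨x, hx⟩
      simp only [Finset.mem_insert, Finset.mem_singleton] at hx
      rcases hx with rfl | rfl | rfl
      · exact ⟨0, rfl⟩
      · exact ⟨1, rfl⟩
      · exact ⟨2, rfl⟩
  have hsub := Matrix.det_submatrix_equiv_self (Equiv.ofBijective e he)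
      (fourierMinor N {0, a, b})
  rw [hdet, Matrix.det_fin_three] at hsub
  set ω := omegaN N with hωdef
  set x := ω ^ (a * a) with hx
  set y := ω ^ (b * b) with hy
  set z := ω ^ (a * b) with hz
  have hba : ω ^ (b * a) = z := by rw [hz, Nat.mul_comm]
  have hentry : ∀ i j : Fin 3, ((fourierMinor N {0, a, b}).submatrix
      (Equiv.ofBijective e he) (Equiv.ofBijective e he)) i j
      = ω ^ (((e i : ℕ)) * ((e j : ℕ))) := by
    intro i j; rfl
  simp only [hentry] at hsub
  have key : (x - 1) * (y - 1) - (z - 1) ^ 2 = 0 := by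
    have e0 : ((e 0 : ℕ)) = 0 := rfl
    have e1 : ((e 1 : ℕ)) = a := rfl
    have e2 : ((e 2 : ℕ)) = b := rfl
    rw [e0, e1, e2] at hsub
    simp only [Nat.zero_mul, Nat.mul_zero, pow_zero] at hsub
    rw [← hx, ← hy, ← hz, hba] at hsub
    ring_nf
    ring_nf at hsub
    linear_combination hsub
  by_cases hxa : N ∣ a ^ 2
  · exact Or.inl hxa
  by_cases hxb : N ∣ b ^ 2
  · exact Or.inr (Or.inl hxb)
  right; right
  have hx1 : x ≠ 1 := fun h => hxa (by rw [pow_two]; exact (hω.pow_eq_one_iff_dvd _).mp h)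
  have hy1 : y ≠ 1 := fun h => hxb (by rw [pow_two]; exact (hω.pow_eq_one_iff_dvd _).mp h)
  have hω0 : ω ≠ 0 := fun h => by simp [h] at habs
  have hx0 : x ≠ 0 := pow_ne_zero _ hω0
  have hy0 : y ≠ 0 := pow_ne_zero _ hω0
  have hz0 : z ≠ 0 := pow_ne_zero _ hω0
  have hconj : ∀ n : ℕ, (starRingEnd ℂ) (ω ^ n) = (ω ^ n)⁻¹ := by
    intro n
    rw [← Complex.inv_eq_conj]
    simp [map_pow, habs]
  have cx : (starRingEnd ℂ) x = x⁻¹ := hconj (a*a)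
  have cy : (starRingEnd ℂ) y = y⁻¹ := hconj (b*b)
  have cz : (starRingEnd ℂ) z = z⁻¹ := hconj (a*b)
  have key2 : (x⁻¹ - 1) * (y⁻¹ - 1) - (z⁻¹ - 1) ^ 2 = 0 := by
    have h := congrArg (starRingEnd ℂ) key
    simpa [map_sub, _root_.map_mul, map_pow, _root_.map_one, cx, cy, cz] using h
  have hw : (x - 1) * (y - 1) = (z - 1) ^ 2 := by linear_combination key
  have hz1 : (z - 1) ^ 2 ≠ 0 := by
    rw [← hw]
    exact mul_ne_zero (sub_ne_zero.mpr hx1) (sub_ne_zero.mpr hy1)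
  field_simp at key2
  have h3 : (z - 1) ^ 2 * (z ^ 2 - x * y) = 0 := by
    linear_combination key2 - z ^ 2 * hw
  have hz2 : z ^ 2 = x * y := by
    rcases mul_eq_zero.mp h3 with h | h
    · exact absurd h hz1
    · exact sub_eq_zero.mp h
  have hsum : (b - a) ^ 2 + 2 * (a * b) = a * a + b * b := by
    obtain ⟨c, rfl⟩ : ∃ c, b = a + c := ⟨b - a, by omega⟩
    simp only [Nat.add_sub_cancel_left]
    ring
  have hfin : ω ^ ((b - a) ^ 2) * ω ^ (2 * (a * b)) = ω ^ (2 * (a * b)) := by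
    rw [← pow_add, hsum, pow_add, ← hx, ← hy, ← hz2, hz, ← pow_mul, Nat.mul_comm]
  have hone : ω ^ ((b - a) ^ 2) = 1 := by
    have hne : ω ^ (2 * (a * b)) ≠ 0 := pow_ne_zero _ hω0
    exact mul_right_cancel₀ hne (hfin.trans (one_mul _).symm)
  exact (hω.pow_eq_one_iff_dvd _).mp hone
end

section
/- Let N ≥ 4 be a natural number divisible by 4. Then for each r with 2 ≤ r ≤ N−2 there exists a subset K ⊆ {0,1,…,N−1} with |K| = r such that the principal submatrix 𝓕_N[K] of the Fourier matrix is singular. -/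
open Complex Matrix Finset

lemma omegaN_pow_half (M : ℕ) (hM : 0 < M) : omegaN (2 * M) ^ M = -1 := by
  rw [omegaN, ← Complex.exp_nat_mul]
  have hM' : (M : ℂ) ≠ 0 := Nat.cast_ne_zero.mpr hM.ne'
  have : (M : ℂ) * (2 * Real.pi * Complex.I / (2 * M : ℕ)) = Real.pi * Complex.I := by
    push_cast
    field_simp
  rw [this, Complex.exp_pi_mul_I]

lemma key (M : ℕ) (hM : 0 < M) (B X : Finset ℕ)
    (hB : ∀ p ∈ B, p < M) (hX : ∀ x ∈ X, x < M) (hXB : Disjoint X B)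
    (hT : ((B ∪ B.image (· + M) ∪ X).filter (fun n => ¬ Even n)).card < B.card) :
    (fourierMinor (2 * M) (B ∪ B.image (· + M) ∪ X)).det = 0 := by
  classical
  set ω := omegaN (2 * M) with hωdef
  have hωM : ω ^ M = -1 := omegaN_pow_half M hM
  set K := B ∪ B.image (· + M) ∪ X with hKdef
  set T := K.filter (fun n => ¬ Even n) with hTdef
  have hcard : Fintype.card ↥T < Fintype.card ↥B := by
    simpa [Fintype.card_coe] using hT
  obtain ⟨ι⟩ : Nonempty (↥T ↪ ↥B) := Function.Embedding.nonempty_of_card_le hcard.le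
  -- square auxiliary matrix with a zero row
  set Q : Matrix ↥B ↥B ℂ :=
    fun i j => ∑ ℓ : ↥T, if ι ℓ = i then ω ^ ((j : ℕ) * (ℓ : ℕ)) else 0 with hQdef
  have hdetQ : Q.det = 0 := by
    obtain ⟨i, hi⟩ : ∃ i : ↥B, ∀ ℓ, ι ℓ ≠ i := by
      by_contra hc
      push_neg at hc
      exact absurd (Fintype.card_le_of_surjective ι hc) (by omega)
    apply Matrix.det_eq_zero_of_row_eq_zero i
    intro j
    apply Finset.sum_eq_zero
    intro ℓ _
    exact if_neg (hi ℓ)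
  obtain ⟨v, hv0, hv⟩ := Matrix.exists_mulVec_eq_zero_iff.mpr hdetQ
  have hvT : ∀ ℓ : ↥T, ∑ j : ↥B, ω ^ ((j : ℕ) * (ℓ : ℕ)) * v j = 0 := by
    intro ℓ
    have h1 := congrFun hv (ι ℓ)
    simp only [Matrix.mulVec, dotProduct, Pi.zero_apply] at h1
    have hQ : ∀ j : ↥B, Q (ι ℓ) j = ω ^ ((j : ℕ) * (ℓ : ℕ)) := by
      intro j
      show (∑ ℓ' : ↥T, if ι ℓ' = ι ℓ then ω ^ ((j : ℕ) * (ℓ' : ℕ)) else 0)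
        = ω ^ ((j : ℕ) * (ℓ : ℕ))
      rw [Finset.sum_eq_single ℓ]
      · simp
      · intro b _ hb
        exact if_neg (fun h => hb (ι.injective h))
      · intro h
        exact absurd (Finset.mem_univ ℓ) h
    rw [← h1]
    exact Finset.sum_congr rfl (fun j _ => by rw [hQ j])
  -- the null vector on K
  set U : ℕ → ℂ := fun n =>
    (if h : n ∈ B then v ⟨n, h⟩ else 0) -
      (if h : n - M ∈ B ∧ M ≤ n then v ⟨n - M, h.1⟩ else 0) with hUdef
  have hUB : ∀ (p : ℕ) (h : p ∈ B), U p = v ⟨p, h⟩ := by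
    intro p h
    have h2 : ¬ (p - M ∈ B ∧ M ≤ p) := fun hc => by have := hB p h; omega
    rw [hUdef]
    simp only [dif_pos h, dif_neg h2, sub_zero]
  have hUB' : ∀ (p : ℕ) (h : p ∈ B), U (p + M) = - v ⟨p, h⟩ := by
    intro p h
    have h1 : p + M ∉ B := fun hc => by have := hB _ hc; omega
    have e : p + M - M = p := by omega
    have h2 : p + M - M ∈ B ∧ M ≤ p + M := ⟨by rw [e]; exact h, by omega⟩
    rw [hUdef]
    simp only [dif_neg h1, dif_pos h2, zero_sub, neg_inj]
    congr 1
    exact Subtype.ext e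
  have hUX : ∀ x ∈ X, U x = 0 := by
    intro x hx
    have h1 : x ∉ B := Finset.disjoint_left.mp hXB hx
    have h2 : ¬ (x - M ∈ B ∧ M ≤ x) := fun hc => by have := hX x hx; omega
    rw [hUdef]
    simp only [dif_neg h1, dif_neg h2, sub_zero]
  obtain ⟨p₀, hp₀⟩ : ∃ p : ↥B, v p ≠ 0 := by
    by_contra h
    push_neg at h
    exact hv0 (funext h)
  have hp₀K : (p₀ : ℕ) ∈ K := by
    rw [hKdef]
    exact Finset.mem_union_left _ (Finset.mem_union_left _ p₀.2)
  -- disjointness facts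
  have hd1 : Disjoint B (B.image (· + M)) := by
    rw [Finset.disjoint_left]
    intro a ha hb
    obtain ⟨p, hp, rfl⟩ := Finset.mem_image.mp hb
    have := hB _ ha; omega
  have hd2 : Disjoint (B ∪ B.image (· + M)) X := by
    rw [Finset.disjoint_right]
    intro x hx hb
    rcases Finset.mem_union.mp hb with h | h
    · exact Finset.disjoint_left.mp hXB hx h
    · obtain ⟨p, hp, rfl⟩ := Finset.mem_image.mp h
      have := hX _ hx; omega
  refine Matrix.exists_mulVec_eq_zero_iff.mp ⟨fun x => U x, ?_, ?_⟩
  · intro h0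
    have := congrFun h0 ⟨(p₀ : ℕ), hp₀K⟩
    rw [hUB _ p₀.2] at this
    simp only [Pi.zero_apply] at this
    exact hp₀ (by simpa using this)
  · funext k
    show ∑ x : ↥K, fourierMinor (2 * M) K k x * U x = 0
    have hstep : ∑ x : ↥K, fourierMinor (2 * M) K k x * U x
        = ∑ n ∈ K, ω ^ ((k : ℕ) * n) * U n := by
      rw [← Finset.sum_coe_sort K (fun n => ω ^ ((k : ℕ) * n) * U n)]
      rfl
    rw [hstep]
    have main : ∀ κ : ℕ, κ ∈ K →
        ∑ n ∈ (B ∪ B.image (· + M) ∪ X), ω ^ (κ * n) * U n = 0 := by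
      intro κ hκ
      rw [Finset.sum_union hd2, Finset.sum_union hd1]
      have hXzero : ∑ n ∈ X, ω ^ (κ * n) * U n = 0 :=
        Finset.sum_eq_zero (fun n hn => by rw [hUX n hn, mul_zero])
      set S := ∑ p : ↥B, ω ^ (κ * (p : ℕ)) * v p with hSdef
      have hBsum : ∑ n ∈ B, ω ^ (κ * n) * U n = S := by
        rw [hSdef, ← Finset.sum_coe_sort B (fun n => ω ^ (κ * n) * U n)]
        exact Finset.sum_congr rfl (fun p _ => by rw [hUB _ p.2])
      have hpow : ∀ p : ℕ, ω ^ (κ * (p + M)) = ω ^ (κ * p) * (-1 : ℂ) ^ κ := by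
        intro p
        have hM2 : ω ^ (κ * M) = (-1 : ℂ) ^ κ := by
          rw [mul_comm κ M, pow_mul, hωM]
        rw [Nat.mul_add, pow_add, hM2]
      have hB'sum : ∑ n ∈ B.image (· + M), ω ^ (κ * n) * U n
          = -((-1 : ℂ) ^ κ * S) := by
        rw [Finset.sum_image (fun p _ q _ h => by omega)]
        rw [hSdef, Finset.mul_sum, ← Finset.sum_neg_distrib,
          ← Finset.sum_coe_sort B (fun n => ω ^ (κ * (n + M)) * U (n + M))]
        refine Finset.sum_congr rfl (fun p _ => ?_)
        rw [hUB' _ p.2, hpow]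
        ring
      rw [hXzero, hBsum, hB'sum, add_zero]
      by_cases hk : Even κ
      · rw [hk.neg_one_pow]
        ring
      · have hkT : κ ∈ T := by
          rw [hTdef]
          exact Finset.mem_filter.mpr ⟨hκ, hk⟩
        have hS0 : S = 0 := by
          rw [hSdef]
          rw [← hvT ⟨κ, hkT⟩]
          exact Finset.sum_congr rfl (fun j _ => by rw [Nat.mul_comm])
        rw [hS0]
        ring
    exact main (k : ℕ) k.2
lemma build (q a b : ℕ) (hq : 1 ≤ q) (ha : a ≤ q) (hb : b ≤ q)
    (X : Finset ℕ) (hXlt : ∀ x ∈ X, x < 2 * q)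
    (hXB : ∀ x ∈ X, (∀ j < a, x ≠ 2 * j) ∧ (∀ j < b, x ≠ 2 * j + 1))
    (hodd : (X.filter (fun n => ¬ Even n)).card + 2 * b < a + b) :
    ∃ K : Finset ℕ, K ⊆ Finset.range (4 * q) ∧ K.card = 2 * (a + b) + X.card ∧
      (fourierMinor (4 * q) K).det = 0 := by
  classical
  set BE := (Finset.range a).image (fun j => 2 * j) with hBE
  set BO := (Finset.range b).image (fun j => 2 * j + 1) with hBO
  set B := BE ∪ BO with hBdef
  have hBEmem : ∀ p ∈ BE, p < 2 * q ∧ p % 2 = 0 := by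
    intro p hp
    obtain ⟨j, hj, rfl⟩ := Finset.mem_image.mp hp
    rw [Finset.mem_range] at hj
    omega
  have hBOmem : ∀ p ∈ BO, p < 2 * q ∧ p % 2 = 1 := by
    intro p hp
    obtain ⟨j, hj, rfl⟩ := Finset.mem_image.mp hp
    rw [Finset.mem_range] at hj
    omega
  have hBlt : ∀ p ∈ B, p < 2 * q := by
    intro p hp
    rcases Finset.mem_union.mp hp with h | h
    · exact (hBEmem p h).1
    · exact (hBOmem p h).1
  have hXBd : Disjoint X B := by
    rw [Finset.disjoint_left]
    intro x hx hxB
    obtain ⟨h1, h2⟩ := hXB x hx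
    rcases Finset.mem_union.mp hxB with h | h
    · obtain ⟨j, hj, rfl⟩ := Finset.mem_image.mp h
      exact h1 j (Finset.mem_range.mp hj) rfl
    · obtain ⟨j, hj, rfl⟩ := Finset.mem_image.mp h
      exact h2 j (Finset.mem_range.mp hj) rfl
  have cBE : BE.card = a := by
    rw [hBE, Finset.card_image_of_injective _ (fun x y h => by omega), Finset.card_range]
  have cBO : BO.card = b := by
    rw [hBO, Finset.card_image_of_injective _ (fun x y h => by omega), Finset.card_range]
  have dEO : Disjoint BE BO := by
    rw [Finset.disjoint_left]
    intro p h1 h2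
    have := (hBEmem p h1).2
    have := (hBOmem p h2).2
    omega
  have cB : B.card = a + b := by
    rw [hBdef, Finset.card_union_of_disjoint dEO, cBE, cBO]
  have dBB' : Disjoint B (B.image (· + 2 * q)) := by
    rw [Finset.disjoint_left]
    intro p h1 h2
    obtain ⟨j, hj, rfl⟩ := Finset.mem_image.mp h2
    have := hBlt _ h1
    have := hBlt _ hj
    omega
  have dKX : Disjoint (B ∪ B.image (· + 2 * q)) X := by
    rw [Finset.disjoint_right]
    intro x hx hb'
    rcases Finset.mem_union.mp hb' with h | h
    · exact Finset.disjoint_left.mp hXBd hx h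
    · obtain ⟨p, hp, rfl⟩ := Finset.mem_image.mp h
      have := hXlt _ hx
      have := hBlt _ hp
      omega
  refine ⟨B ∪ B.image (· + 2 * q) ∪ X, ?_, ?_, ?_⟩
  · intro n hn
    rw [Finset.mem_range]
    rcases Finset.mem_union.mp hn with h | h
    · rcases Finset.mem_union.mp h with h' | h'
      · have := hBlt _ h'; omega
      · obtain ⟨p, hp, rfl⟩ := Finset.mem_image.mp h'
        have := hBlt _ hp; omega
    · have := hXlt _ h; omega
  · rw [Finset.card_union_of_disjoint dKX, Finset.card_union_of_disjoint dBB',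
      Finset.card_image_of_injective _ (add_left_injective (2 * q)),
      cB]
    ring
  · rw [show 4 * q = 2 * (2 * q) by ring]
    apply key (2 * q) (by omega) B X hBlt hXlt hXBd
    rw [cB]
    have hsub : ((B ∪ B.image (· + 2 * q) ∪ X).filter (fun n => ¬ Even n))
        ⊆ BO ∪ BO.image (· + 2 * q) ∪ X.filter (fun n => ¬ Even n) := by
      intro n hn
      obtain ⟨hnK, hno⟩ := Finset.mem_filter.mp hn
      rw [Nat.not_even_iff] at hno
      rcases Finset.mem_union.mp hnK with h | h
      · rcases Finset.mem_union.mp h with h' | h'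
        · rcases Finset.mem_union.mp h' with h'' | h''
          · have := (hBEmem _ h'').2; omega
          · exact Finset.mem_union_left _ (Finset.mem_union_left _ h'')
        · obtain ⟨p, hp, rfl⟩ := Finset.mem_image.mp h'
          rcases Finset.mem_union.mp hp with h'' | h''
          · have := (hBEmem _ h'').2; omega
          · exact Finset.mem_union_left _ (Finset.mem_union_right _
              (Finset.mem_image.mpr ⟨p, h'', rfl⟩))
      · exact Finset.mem_union_right _
          (Finset.mem_filter.mpr ⟨h, by rw [Nat.not_even_iff]; exact hno⟩)
    calc ((B ∪ B.image (· + 2 * q) ∪ X).filter (fun n => ¬ Even n)).card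
        ≤ (BO ∪ BO.image (· + 2 * q) ∪ X.filter (fun n => ¬ Even n)).card :=
          Finset.card_le_card hsub
      _ ≤ (BO ∪ BO.image (· + 2 * q)).card + (X.filter (fun n => ¬ Even n)).card :=
          Finset.card_union_le _ _
      _ ≤ BO.card + (BO.image (· + 2 * q)).card + (X.filter (fun n => ¬ Even n)).card := by
          have := Finset.card_union_le BO (BO.image (· + 2 * q))
          omega
      _ ≤ b + b + (X.filter (fun n => ¬ Even n)).card := by
          have := Finset.card_image_le (s := BO) (f := (· + 2 * q))
          omega
      _ < a + b := by omega

/-- If `4 ∣ N` and `N ≥ 4`, then for every `2 ≤ r ≤ N - 2` the Fourier matrix `𝓕_N`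
has a singular `r × r` principal submatrix. -/
theorem fourier_exists_zero_principal_minor_of_four_dvd
    (N : ℕ) (hN : 4 ≤ N) (h4 : 4 ∣ N)
    (r : ℕ) (hr2 : 2 ≤ r) (hrN : r ≤ N - 2) :
    ∃ K : Finset ℕ, K ⊆ Finset.range N ∧ K.card = r ∧ (fourierMinor N K).det = 0 := by
  classical
  obtain ⟨q, rfl⟩ := h4
  have hq : 1 ≤ q := by omega
  set s := r / 2 with hs
  have hsr : 2 * s + r % 2 = r := by omega
  have hrle : r ≤ 4 * q - 2 := hrN
  by_cases hsq : s < q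
  · obtain ⟨K, h1, h2, h3⟩ := build q s 0 hq (by omega) (by omega)
      (if r % 2 = 1 then {2 * s} else ∅)
      (by split <;> simp <;> omega)
      (by
        intro x hx
        split at hx
        · rw [Finset.mem_singleton] at hx
          subst hx
          exact ⟨fun j hj => by omega, fun j hj => by omega⟩
        · simp at hx)
      (by
        have h0 : ((if r % 2 = 1 then ({2 * s} : Finset ℕ) else ∅).filter
            (fun n => ¬ Even n)).card = 0 := by
          split
          · rw [Finset.card_eq_zero, Finset.filter_eq_empty_iff]
            intro x hx
            rw [Finset.mem_singleton] at hx
            subst hx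
            simp [Nat.even_iff]
          · simp
        rw [h0]
        omega)
    refine ⟨K, h1, ?_, h3⟩
    rw [h2]
    split <;> simp <;> omega
  · push_neg at hsq
    have hbound : 2 * s + r % 2 ≤ 4 * q - 2 := by omega
    obtain ⟨K, h1, h2, h3⟩ := build q q (s - q) hq le_rfl (by omega)
      (if r % 2 = 1 then {2 * (s - q) + 1} else ∅)
      (by split <;> simp <;> omega)
      (by
        intro x hx
        split at hx
        · rw [Finset.mem_singleton] at hx
          subst hx
          exact ⟨fun j hj => by omega, fun j hj => by omega⟩
        · simp at hx)
      (by
        have h0 : ((if r % 2 = 1 then ({2 * (s - q) + 1} : Finset ℕ) else ∅).filter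
            (fun n => ¬ Even n)).card = r % 2 := by
          split
          · rw [Finset.filter_singleton, if_pos (show ¬ Even (2 * (s - q) + 1) by rw [Nat.not_even_iff]; omega)]
            simp
            omega
          · simp
            omega
        rw [h0]
        omega)
    refine ⟨K, h1, ?_, h3⟩
    rw [h2]
    split <;> simp <;> omega
end
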